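/- arXiv:2410.19969 — 3 statements merged into one kernel-verified Lean document; each statement's English description precedes it below -/
import Mathlib

section
/- Let ω ∈ ℝ with sin ω ≠ 0, and suppose φ₁, φ₂ : V → ℂ are both vertex eigenfunctions of frequency ω. For each oriented edge e and j = 1,2 set a_{e,j} = φ_j(e₀), b_{e,j} = φ_j(e₁), A_{e,j} = a_{e,j}, and B_{e,j} = (b_{e,j} − a_{e,j}·cos ω)/sin ω. Then Σ_{v ∈ V} deg(v)·φ₁(v)·conj(φ₂(v)) = Σ_{e ∈ E} (a_{e,1}·conj(a_{e,2}) + b_{e,1}·conj(b_{e,2})) = Σ_{e ∈ E} (A_{e,1}·conj(A_{e,2}) + B_{e,1}·conj(B_{e,2})). -/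
/-!
Every dart of `G` is an oriented edge `e` traversed forwards or backwards, so for any
`f : V → V → M` the double sum `∑ v, ∑ w ~ v, f v w` equals `∑ e, (f e₀ e₁ + f e₁ e₀)`.
With `f v w = φ₁ v * conj (φ₂ v)` this is the first identity. With `f v w = φ₁ w * conj (φ₂ v)`
the eigenvalue equation turns the mixed edge sum `∑ e, (b₁ ā₂ + a₁ b̄₂)` into
`cos ω * ∑ e, (a₁ ā₂ + b₁ b̄₂)`. Since `sin² ω + cos² ω = 1`, on each edge
`A₁ Ā₂ + B₁ B̄₂ - (a₁ ā₂ + b₁ b̄₂) = cos ω / sin² ω * (cos ω (a₁ ā₂ + b₁ b̄₂) - (b₁ ā₂ + a₁ b̄₂))`,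
and these corrections therefore sum to zero.
-/

open Finset ComplexConjugate

namespace SimpleGraph

variable {V : Type*} (G : SimpleGraph V)

theorem sum_darts_eq_sum_sum_neighborFinset [Fintype V] [DecidableRel G.Adj]
    {M : Type*} [AddCommMonoid M] (f : V → V → M) :
    ∑ d : G.Dart, f d.fst d.snd = ∑ v, ∑ w ∈ G.neighborFinset v, f v w := by
  let e : (Σ v, G.neighborSet v) ≃ G.Dart :=
    { toFun := fun s => ⟨(s.1, s.2), s.2.2⟩
      invFun := fun d => ⟨d.fst, d.snd, d.adj⟩ }
  rw [← Fintype.sum_equiv e (fun s => f s.1 s.2) _ fun _ => rfl, Fintype.sum_sigma]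
  refine Fintype.sum_congr _ _ fun v => ?_
  exact (Finset.sum_subtype _ (fun w => mem_neighborFinset G v w) (f v)).symm

variable {G} {E : Type*} {e₀ e₁ : E → V}

def orientedDart (hadj : ∀ e, G.Adj (e₀ e) (e₁ e)) (e : E) : G.Dart := ⟨(e₀ e, e₁ e), hadj e⟩

theorem orientedDart_edge (hadj : ∀ e, G.Adj (e₀ e) (e₁ e)) (e : E) :
    (orientedDart hadj e).edge = s(e₀ e, e₁ e) := rfl

theorem bijective_orientedDart_or_symm (hadj : ∀ e, G.Adj (e₀ e) (e₁ e))
    (hinj : ∀ e e' : E, s(e₀ e, e₁ e) = s(e₀ e', e₁ e') → e = e')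
    (hsurj : ∀ x ∈ G.edgeSet, ∃ e : E, s(e₀ e, e₁ e) = x) :
    Function.Bijective fun p : E × Bool =>
      cond p.2 (orientedDart hadj p.1) (orientedDart hadj p.1).symm := by
  constructor
  · rintro ⟨e, b⟩ ⟨e', b'⟩ h
    have hedge : (orientedDart hadj e).edge = (orientedDart hadj e').edge := by
      cases b <;> cases b' <;> simpa [Dart.edge_symm] using congrArg Dart.edge h
    obtain rfl := hinj e e' hedge
    cases b <;> cases b' <;> simp_all [Dart.symm_ne, (Dart.symm_ne _).symm]
  · intro d
    obtain ⟨e, he⟩ := hsurj d.edge d.edge_mem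
    rcases (dart_edge_eq_iff _ _).mp ((orientedDart_edge hadj e).trans he) with h | h
    · exact ⟨(e, true), h⟩
    · exact ⟨(e, false), by simp [h, Dart.symm_symm]⟩

theorem sum_darts_eq_sum_orientation [Fintype V] [DecidableRel G.Adj] [Fintype E]
    (hadj : ∀ e, G.Adj (e₀ e) (e₁ e))
    (hinj : ∀ e e' : E, s(e₀ e, e₁ e) = s(e₀ e', e₁ e') → e = e')
    (hsurj : ∀ x ∈ G.edgeSet, ∃ e : E, s(e₀ e, e₁ e) = x)
    {M : Type*} [AddCommMonoid M] (f : V → V → M) :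
    ∑ d : G.Dart, f d.fst d.snd = ∑ e, (f (e₀ e) (e₁ e) + f (e₁ e) (e₀ e)) := by
  rw [← Fintype.sum_bijective _ (bijective_orientedDart_or_symm hadj hinj hsurj) _ _
    fun _ => rfl, Fintype.sum_prod_type]
  simp [orientedDart]

theorem sum_sum_neighborFinset_mul_of_eigen [Fintype V] [DecidableRel G.Adj]
    {R : Type*} [CommSemiring R] {c : R} {φ : V → R}
    (hφ : ∀ v, ∑ w ∈ G.neighborFinset v, φ w = c * G.degree v * φ v) (ψ : V → R) :
    ∑ v, ∑ w ∈ G.neighborFinset v, φ w * ψ v = c * ∑ v, G.degree v * (φ v * ψ v) := by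
  simp_rw [← Finset.sum_mul, hφ, Finset.mul_sum, mul_assoc]

end SimpleGraph

theorem interpolation_mul_conj_eq {ω : ℝ} (hω : Real.sin ω ≠ 0) (a₁ b₁ a₂ b₂ : ℂ) :
    a₁ * conj a₂
        + (b₁ - a₁ * Real.cos ω) / Real.sin ω * conj ((b₂ - a₂ * Real.cos ω) / Real.sin ω)
      = a₁ * conj a₂ + b₁ * conj b₂ + Real.cos ω / Real.sin ω ^ 2 *
          (Real.cos ω * (a₁ * conj a₂ + b₁ * conj b₂) - (b₁ * conj a₂ + a₁ * conj b₂)) := by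
  have hs : (Real.sin ω : ℂ) ≠ 0 := Complex.ofReal_ne_zero.mpr hω
  have hsq : (Real.sin ω : ℂ) ^ 2 + Real.cos ω ^ 2 = 1 := by
    exact_mod_cast Real.sin_sq_add_cos_sq ω
  simp only [map_div₀, map_sub, map_mul, Complex.conj_ofReal]
  field_simp
  linear_combination (-b₁ * conj b₂) * hsq

theorem qgfft_eqdot_general
    {V : Type*} [Fintype V]
    (G : SimpleGraph V) [DecidableRel G.Adj]
    {E : Type*} [Fintype E] (e₀ e₁ : E → V)
    (hadj : ∀ e : E, G.Adj (e₀ e) (e₁ e))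
    (hinj : ∀ e e' : E, s(e₀ e, e₁ e) = s(e₀ e', e₁ e') → e = e')
    (hsurj : ∀ x ∈ G.edgeSet, ∃ e : E, s(e₀ e, e₁ e) = x)
    (ω : ℝ) (hω : Real.sin ω ≠ 0)
    (φ₁ φ₂ : V → ℂ)
    (hφ₁ : ∀ v : V, ∑ w ∈ G.neighborFinset v, φ₁ w
      = (Real.cos ω : ℂ) * (G.degree v : ℂ) * φ₁ v) :
    (∑ v : V, (G.degree v : ℂ) * (φ₁ v * (starRingEnd ℂ) (φ₂ v))
      = ∑ e : E, (φ₁ (e₀ e) * (starRingEnd ℂ) (φ₂ (e₀ e))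
          + φ₁ (e₁ e) * (starRingEnd ℂ) (φ₂ (e₁ e))))
    ∧ (∑ e : E, (φ₁ (e₀ e) * (starRingEnd ℂ) (φ₂ (e₀ e))
          + φ₁ (e₁ e) * (starRingEnd ℂ) (φ₂ (e₁ e)))
      = ∑ e : E, (φ₁ (e₀ e) * (starRingEnd ℂ) (φ₂ (e₀ e))
          + ((φ₁ (e₁ e) - φ₁ (e₀ e) * (Real.cos ω : ℂ)) / (Real.sin ω : ℂ))
            * (starRingEnd ℂ)
              ((φ₂ (e₁ e) - φ₂ (e₀ e) * (Real.cos ω : ℂ)) / (Real.sin ω : ℂ)))) := by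
  have hsum (f : V → V → ℂ) :
      ∑ v, ∑ w ∈ G.neighborFinset v, f v w = ∑ e, (f (e₀ e) (e₁ e) + f (e₁ e) (e₀ e)) := by
    rw [← G.sum_darts_eq_sum_sum_neighborFinset,
      SimpleGraph.sum_darts_eq_sum_orientation hadj hinj hsurj]
  have hdiag : ∑ v, (G.degree v : ℂ) * (φ₁ v * conj (φ₂ v))
      = ∑ e, (φ₁ (e₀ e) * conj (φ₂ (e₀ e)) + φ₁ (e₁ e) * conj (φ₂ (e₁ e))) := by
    simpa using hsum fun v _ => φ₁ v * conj (φ₂ v)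
  have hcross : ∑ e, (φ₁ (e₁ e) * conj (φ₂ (e₀ e)) + φ₁ (e₀ e) * conj (φ₂ (e₁ e)))
      = Real.cos ω * ∑ v, (G.degree v : ℂ) * (φ₁ v * conj (φ₂ v)) := by
    rw [← hsum fun v w => φ₁ w * conj (φ₂ v), G.sum_sum_neighborFinset_mul_of_eigen hφ₁]
  refine ⟨hdiag, ?_⟩
  simp_rw [interpolation_mul_conj_eq hω]
  conv_rhs => rw [Finset.sum_add_distrib, ← Finset.mul_sum, Finset.sum_sub_distrib,
    ← Finset.mul_sum, hcross, hdiag, sub_self, mul_zero, add_zero]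

/-- Theorem `eqdot`: for two vertex eigenfunctions of frequency `ω`
(with `sin ω ≠ 0`), the degree-weighted vertex inner product equals the sum over the
oriented edges of the endpoint products, which in turn equals the sum of the products
of the interpolation coefficients `A, B`. -/
theorem qgfft_eqdot
    {V : Type*} [Fintype V] [DecidableEq V]
    (G : SimpleGraph V) [DecidableRel G.Adj]
    (hdeg : ∀ v : V, 0 < G.degree v)
    {E : Type*} [Fintype E] (e₀ e₁ : E → V)
    (hadj : ∀ e : E, G.Adj (e₀ e) (e₁ e))
    (hinj : ∀ e e' : E, s(e₀ e, e₁ e) = s(e₀ e', e₁ e') → e = e')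
    (hsurj : ∀ x ∈ G.edgeSet, ∃ e : E, s(e₀ e, e₁ e) = x)
    (ω : ℝ) (hω : Real.sin ω ≠ 0)
    (φ₁ φ₂ : V → ℂ)
    (hφ₁ : ∀ v : V, ∑ w ∈ G.neighborFinset v, φ₁ w
      = (Real.cos ω : ℂ) * (G.degree v : ℂ) * φ₁ v)
    (hφ₂ : ∀ v : V, ∑ w ∈ G.neighborFinset v, φ₂ w
      = (Real.cos ω : ℂ) * (G.degree v : ℂ) * φ₂ v) :
    (∑ v : V, (G.degree v : ℂ) * (φ₁ v * (starRingEnd ℂ) (φ₂ v))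
      = ∑ e : E, (φ₁ (e₀ e) * (starRingEnd ℂ) (φ₂ (e₀ e))
          + φ₁ (e₁ e) * (starRingEnd ℂ) (φ₂ (e₁ e))))
    ∧ (∑ e : E, (φ₁ (e₀ e) * (starRingEnd ℂ) (φ₂ (e₀ e))
          + φ₁ (e₁ e) * (starRingEnd ℂ) (φ₂ (e₁ e)))
      = ∑ e : E, (φ₁ (e₀ e) * (starRingEnd ℂ) (φ₂ (e₀ e))
          + ((φ₁ (e₁ e) - φ₁ (e₀ e) * (Real.cos ω : ℂ)) / (Real.sin ω : ℂ))
            * (starRingEnd ℂ)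
              ((φ₂ (e₁ e) - φ₂ (e₀ e) * (Real.cos ω : ℂ)) / (Real.sin ω : ℂ)))) :=
  qgfft_eqdot_general G e₀ e₁ hadj hinj hsurj ω hω φ₁ φ₂ hφ₁
end

section
/- Let ω ∈ ℝ with ω > 0 and sin ω ≠ 0, let m be a nonnegative integer, and suppose φ₁, φ₂ : V → ℂ are both vertex eigenfunctions of frequency ω. For each oriented edge e and j = 1,2 set A_{e,j} = φ_j(e₀) and B_{e,j} = (φ_j(e₁) − φ_j(e₀)·cos ω)/sin ω. Then the frequency-shifted family has the same mutual inner product as the original: Σ_{e ∈ E} ∫₀¹ (A_{e,1}·cos((ω+2mπ)x) + B_{e,1}·sin((ω+2mπ)x))·conj(A_{e,2}·cos((ω+2mπ)x) + B_{e,2}·sin((ω+2mπ)x)) dx = Σ_{e ∈ E} ∫₀¹ (A_{e,1}·cos(ωx) + B_{e,1}·sin(ωx))·conj(A_{e,2}·cos(ωx) + B_{e,2}·sin(ωx)) dx. In particular, if the frequency-ω family is orthonormal then so is the frequency-(ω+2mπ) family. -/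
open scoped ComplexConjugate
open Finset intervalIntegral

/-!
On an edge, `∫₀¹ (A cos νx + B sin νx) · conj (A' cos νx + B' sin νx) dx` equals
`(A Ā' + B B̄') / 2 + Q / (2ν)`, where `Q` depends on `ν` only through `sin ν` and `cos ν`, which do
not change under `ν ↦ ν + 2mπ`. Writing `B`, `B'` in terms of the vertex values,
`sin ω · Q = φ₁(e₀) φ̄₂(e₁) + φ₁(e₁) φ̄₂(e₀) - cos ω (φ₁(e₀) φ̄₂(e₀) + φ₁(e₁) φ̄₂(e₁))`, and summed
over the edges this is `∑ᵥ φ₁(v) · conj (∑_{w ~ v} φ₂(w) - cos ω deg(v) φ₂(v)) = 0`. So the total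
inner product is `∑ₑ (A Ā' + B B̄') / 2` at both frequencies.
-/

section Trigonometric

variable {ν : ℝ}

theorem integral_cos_mul_sq_zero_one (hν : ν ≠ 0) :
    ∫ x in (0:ℝ)..1, Real.cos (ν * x) ^ 2 = 1 / 2 + Real.sin ν * Real.cos ν / (2 * ν) := by
  rw [integral_comp_mul_left (fun x => Real.cos x ^ 2) hν, integral_cos_sq]
  simp only [mul_zero, mul_one, smul_eq_mul, Real.sin_zero, Real.cos_zero]
  field_simp
  ring

theorem integral_sin_mul_sq_zero_one (hν : ν ≠ 0) :
    ∫ x in (0:ℝ)..1, Real.sin (ν * x) ^ 2 = 1 / 2 - Real.sin ν * Real.cos ν / (2 * ν) := by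
  rw [integral_comp_mul_left (fun x => Real.sin x ^ 2) hν, integral_sin_sq]
  simp only [mul_zero, mul_one, smul_eq_mul, Real.sin_zero, Real.cos_zero]
  field_simp
  ring

theorem integral_sin_mul_mul_cos_mul_zero_one (hν : ν ≠ 0) :
    ∫ x in (0:ℝ)..1, Real.sin (ν * x) * Real.cos (ν * x) = Real.sin ν ^ 2 / (2 * ν) := by
  rw [integral_comp_mul_left (fun x => Real.sin x * Real.cos x) hν, integral_sin_mul_cos₁]
  simp only [mul_zero, mul_one, smul_eq_mul, Real.sin_zero]
  field_simp
  ring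

theorem integral_trig_mul_trig_zero_one (hν : ν ≠ 0) (a b c d : ℂ) :
    ∫ x in (0:ℝ)..1, (a * Real.cos (ν * x) + b * Real.sin (ν * x))
        * (c * Real.cos (ν * x) + d * Real.sin (ν * x))
      = (a * c + b * d) / 2
        + (Real.sin ν * Real.cos ν * (a * c - b * d) + Real.sin ν ^ 2 * (a * d + b * c))
          / (2 * ν) := by
  have expand : ∀ x : ℝ, (a * Real.cos (ν * x) + b * Real.sin (ν * x))
        * (c * Real.cos (ν * x) + d * Real.sin (ν * x))
      = a * c * ((Real.cos (ν * x) ^ 2 : ℝ) : ℂ)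
        + (a * d + b * c) * ((Real.sin (ν * x) * Real.cos (ν * x) : ℝ) : ℂ)
        + b * d * ((Real.sin (ν * x) ^ 2 : ℝ) : ℂ) := fun x => by push_cast; ring
  simp_rw [expand]
  rw [integral_add, integral_add, integral_const_mul, integral_const_mul, integral_const_mul,
    integral_ofReal, integral_ofReal, integral_ofReal, integral_cos_mul_sq_zero_one hν,
    integral_sin_mul_mul_cos_mul_zero_one hν, integral_sin_mul_sq_zero_one hν]
  · push_cast
    ring
  all_goals exact Continuous.intervalIntegrable (by fun_prop) _ _

end Trigonometric

namespace SimpleGraph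

variable {V E : Type*} [Fintype V] (G : SimpleGraph V) [DecidableRel G.Adj] [Fintype E]
  {e₀ e₁ : E → V}

theorem sum_add_swap_eq_sum_neighborFinset {M : Type*} [AddCommMonoid M]
    (hadj : ∀ e, G.Adj (e₀ e) (e₁ e))
    (hinj : ∀ e e', s(e₀ e, e₁ e) = s(e₀ e', e₁ e') → e = e')
    (hsurj : ∀ x ∈ G.edgeSet, ∃ e, s(e₀ e, e₁ e) = x) (g : V → V → M) :
    ∑ e, (g (e₀ e) (e₁ e) + g (e₁ e) (e₀ e)) = ∑ v, ∑ w ∈ G.neighborFinset v, g v w := by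
  let orient : E ⊕ E → V × V := Sum.elim (fun e => (e₀ e, e₁ e)) (fun e => (e₁ e, e₀ e))
  have hpairs : ∑ v, ∑ w ∈ G.neighborFinset v, g v w
      = ∑ p ∈ univ.filter (fun p : V × V => G.Adj p.1 p.2), g p.1 p.2 := by
    rw [sum_filter, Fintype.sum_prod_type]
    simp only [neighborFinset_eq_filter, sum_filter]
  have hsplit : ∑ e, (g (e₀ e) (e₁ e) + g (e₁ e) (e₀ e)) = ∑ x, g (orient x).1 (orient x).2 := by
    rw [Fintype.sum_sum_type, sum_add_distrib]
    rfl
  rw [hpairs, hsplit]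
  refine sum_nbij orient ?_ ?_ ?_ fun _ _ => rfl
  · rintro (e | e) - <;> simp [orient, hadj e, (hadj e).symm]
  · rintro (e | e) - (e' | e') - h <;> simp only [orient, Sum.elim_inl, Sum.elim_inr,
      Prod.mk.injEq] at h
    · rw [hinj e e' (by rw [h.1, h.2])]
    · exact absurd (hinj e e' (by rw [h.1, h.2, Sym2.eq_swap]) ▸ h.1) (hadj e).ne
    · exact absurd (hinj e e' (by rw [h.1, h.2, Sym2.eq_swap]) ▸ h.1) (hadj e).ne.symm
    · rw [hinj e e' (by rw [h.1, h.2])]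
  · rintro ⟨v, w⟩ hvw
    obtain ⟨e, he⟩ := hsurj s(v, w) (mem_filter.mp hvw).2
    rcases Sym2.eq_iff.mp he with ⟨rfl, rfl⟩ | ⟨rfl, rfl⟩
    exacts [⟨Sum.inl e, mem_coe.mpr (mem_univ _), rfl⟩, ⟨Sum.inr e, mem_coe.mpr (mem_univ _), rfl⟩]

theorem sum_edge_cross_eq_zero (hadj : ∀ e, G.Adj (e₀ e) (e₁ e))
    (hinj : ∀ e e', s(e₀ e, e₁ e) = s(e₀ e', e₁ e') → e = e')
    (hsurj : ∀ x ∈ G.edgeSet, ∃ e, s(e₀ e, e₁ e) = x) (c : ℝ) (φ ψ : V → ℂ)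
    (hψ : ∀ v, ∑ w ∈ G.neighborFinset v, ψ w = (c : ℂ) * (G.degree v : ℂ) * ψ v) :
    ∑ e, (φ (e₀ e) * conj (ψ (e₁ e)) + φ (e₁ e) * conj (ψ (e₀ e))
      - c * (φ (e₀ e) * conj (ψ (e₀ e)) + φ (e₁ e) * conj (ψ (e₁ e)))) = 0 := by
  have hcross : ∑ v, ∑ w ∈ G.neighborFinset v, φ v * conj (ψ w)
      = c * ∑ v, (G.degree v : ℂ) * (φ v * conj (ψ v)) := by
    rw [mul_sum]
    refine sum_congr rfl fun v _ => ?_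
    rw [← mul_sum, ← map_sum, hψ v, map_mul, map_mul, Complex.conj_ofReal, Complex.conj_natCast]
    ring
  have hdiag : ∑ v, ∑ w ∈ G.neighborFinset v, φ v * conj (ψ v)
      = ∑ v, (G.degree v : ℂ) * (φ v * conj (ψ v)) := by
    simp only [sum_const, card_neighborFinset_eq_degree, nsmul_eq_mul]
  rw [sum_sub_distrib, ← mul_sum,
    G.sum_add_swap_eq_sum_neighborFinset hadj hinj hsurj fun v w => φ v * conj (ψ w),
    G.sum_add_swap_eq_sum_neighborFinset hadj hinj hsurj fun v w => φ v * conj (ψ v),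
    hcross, hdiag, sub_self]

end SimpleGraph

-- With `b = a c + s B`, `q = p c + s B'` and `s² + c² = 1`, the `1 / (2ν)`-coefficient of
-- `integral_trig_mul_trig_zero_one` becomes a cross term of the vertex values `a, b, p, q`.
theorem trig_coeff_eq_cross_div {s c : ℂ} (hs : s ≠ 0) (hsc : s ^ 2 + c ^ 2 = 1) (a b p q : ℂ) :
    s * c * (a * p - (b - a * c) / s * ((q - p * c) / s))
      + s ^ 2 * (a * ((q - p * c) / s) + (b - a * c) / s * p)
      = (a * q + b * p - c * (a * p + b * q)) / s := by
  field_simp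
  linear_combination (a * q + b * p - a * p * c) * hsc

section EdgeWave

variable {V E : Type*}

noncomputable def edgeSinCoeff (ω : ℝ) (φ : V → ℂ) (e₀ e₁ : E → V) (e : E) : ℂ :=
  (φ (e₁ e) - φ (e₀ e) * (Real.cos ω : ℂ)) / (Real.sin ω : ℂ)

/-- The paper's `A_e cos(νx) + B_e sin(νx)` on edge `e`: `A_e = φ(e₀)`, and `B_e` is chosen so that
at frequency `ν = ω` the value at `x = 1` is `φ(e₁)`. -/
noncomputable def edgeWave (ω ν : ℝ) (φ : V → ℂ) (e₀ e₁ : E → V) (e : E) (x : ℝ) : ℂ :=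
  φ (e₀ e) * (Real.cos (ν * x) : ℂ) + edgeSinCoeff ω φ e₀ e₁ e * (Real.sin (ν * x) : ℂ)

theorem sum_integral_edgeWave_mul_conj [Fintype V] (G : SimpleGraph V) [DecidableRel G.Adj]
    [Fintype E] {e₀ e₁ : E → V} (hadj : ∀ e, G.Adj (e₀ e) (e₁ e))
    (hinj : ∀ e e', s(e₀ e, e₁ e) = s(e₀ e', e₁ e') → e = e')
    (hsurj : ∀ x ∈ G.edgeSet, ∃ e, s(e₀ e, e₁ e) = x) {ω ν : ℝ} (hω : Real.sin ω ≠ 0)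
    (hsin : Real.sin ν = Real.sin ω) (hcos : Real.cos ν = Real.cos ω) (φ₁ φ₂ : V → ℂ)
    (hφ₂ : ∀ v, ∑ w ∈ G.neighborFinset v, φ₂ w = (Real.cos ω : ℂ) * (G.degree v : ℂ) * φ₂ v) :
    ∑ e, ∫ x in (0:ℝ)..1, edgeWave ω ν φ₁ e₀ e₁ e x * conj (edgeWave ω ν φ₂ e₀ e₁ e x)
      = ∑ e, (φ₁ (e₀ e) * conj (φ₂ (e₀ e))
          + edgeSinCoeff ω φ₁ e₀ e₁ e * conj (edgeSinCoeff ω φ₂ e₀ e₁ e)) / 2 := by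
  have hν : ν ≠ 0 := by
    rintro rfl
    exact hω (by rw [← hsin, Real.sin_zero])
  have hsC : (Real.sin ω : ℂ) ≠ 0 := Complex.ofReal_ne_zero.mpr hω
  have hpyth : (Real.sin ω : ℂ) ^ 2 + (Real.cos ω : ℂ) ^ 2 = 1 := by
    exact_mod_cast Real.sin_sq_add_cos_sq ω
  let cross : E → ℂ := fun e => φ₁ (e₀ e) * conj (φ₂ (e₁ e)) + φ₁ (e₁ e) * conj (φ₂ (e₀ e))
      - Real.cos ω * (φ₁ (e₀ e) * conj (φ₂ (e₀ e)) + φ₁ (e₁ e) * conj (φ₂ (e₁ e)))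
  calc _ = ∑ e, ((φ₁ (e₀ e) * conj (φ₂ (e₀ e))
          + edgeSinCoeff ω φ₁ e₀ e₁ e * conj (edgeSinCoeff ω φ₂ e₀ e₁ e)) / 2
          + cross e / Real.sin ω / (2 * ν)) := by
        refine sum_congr rfl fun e _ => ?_
        simp only [edgeWave, edgeSinCoeff, map_add, map_mul, map_div₀, map_sub,
          Complex.conj_ofReal]
        rw [integral_trig_mul_trig_zero_one hν, hsin, hcos,
          trig_coeff_eq_cross_div hsC hpyth]
    _ = _ := by
        have hcross : ∑ e, cross e = 0 := G.sum_edge_cross_eq_zero hadj hinj hsurj _ φ₁ φ₂ hφ₂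
        rw [sum_add_distrib, ← sum_div, ← sum_div, ← sum_div, hcross, zero_div, zero_div,
          add_zero]

end EdgeWave

theorem qgfft_freq_shift_inner_product_general
    {V : Type*} [Fintype V]
    (G : SimpleGraph V) [DecidableRel G.Adj]
    {E : Type*} [Fintype E] (e₀ e₁ : E → V)
    (hadj : ∀ e : E, G.Adj (e₀ e) (e₁ e))
    (hinj : ∀ e e' : E, s(e₀ e, e₁ e) = s(e₀ e', e₁ e') → e = e')
    (hsurj : ∀ x ∈ G.edgeSet, ∃ e : E, s(e₀ e, e₁ e) = x)
    (ω : ℝ) (hω : Real.sin ω ≠ 0) (m : ℕ)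
    (φ₁ φ₂ : V → ℂ)
    (hφ₂ : ∀ v : V, ∑ w ∈ G.neighborFinset v, φ₂ w
      = (Real.cos ω : ℂ) * (G.degree v : ℂ) * φ₂ v) :
    ∑ e : E, ∫ x in (0:ℝ)..1,
        (φ₁ (e₀ e) * (Real.cos ((ω + 2 * m * Real.pi) * x) : ℂ)
          + ((φ₁ (e₁ e) - φ₁ (e₀ e) * (Real.cos ω : ℂ)) / (Real.sin ω : ℂ))
            * (Real.sin ((ω + 2 * m * Real.pi) * x) : ℂ))
        * (starRingEnd ℂ)
          (φ₂ (e₀ e) * (Real.cos ((ω + 2 * m * Real.pi) * x) : ℂ)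
            + ((φ₂ (e₁ e) - φ₂ (e₀ e) * (Real.cos ω : ℂ)) / (Real.sin ω : ℂ))
              * (Real.sin ((ω + 2 * m * Real.pi) * x) : ℂ))
    = ∑ e : E, ∫ x in (0:ℝ)..1,
        (φ₁ (e₀ e) * (Real.cos (ω * x) : ℂ)
          + ((φ₁ (e₁ e) - φ₁ (e₀ e) * (Real.cos ω : ℂ)) / (Real.sin ω : ℂ))
            * (Real.sin (ω * x) : ℂ))
        * (starRingEnd ℂ)
          (φ₂ (e₀ e) * (Real.cos (ω * x) : ℂ)
            + ((φ₂ (e₁ e) - φ₂ (e₀ e) * (Real.cos ω : ℂ)) / (Real.sin ω : ℂ))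
              * (Real.sin (ω * x) : ℂ)) := by
  have hshift : ω + 2 * m * Real.pi = ω + m * (2 * Real.pi) := by ring
  have hsin : Real.sin (ω + 2 * m * Real.pi) = Real.sin ω := by
    rw [hshift, Real.sin_add_nat_mul_two_pi]
  have hcos : Real.cos (ω + 2 * m * Real.pi) = Real.cos ω := by
    rw [hshift, Real.cos_add_nat_mul_two_pi]
  exact (sum_integral_edgeWave_mul_conj G hadj hinj hsurj hω hsin hcos φ₁ φ₂ hφ₂).trans
    (sum_integral_edgeWave_mul_conj G hadj hinj hsurj hω rfl rfl φ₁ φ₂ hφ₂).symm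

/-- Corollary `freqinc`: shifting the frequency from `ω` to `ω + 2mπ`
leaves the mutual `L²(𝒢)` inner products of the constructed eigenfunctions unchanged. -/
theorem qgfft_freq_shift_inner_product
    {V : Type*} [Fintype V] [DecidableEq V]
    (G : SimpleGraph V) [DecidableRel G.Adj]
    (hdeg : ∀ v : V, 0 < G.degree v)
    {E : Type*} [Fintype E] (e₀ e₁ : E → V)
    (hadj : ∀ e : E, G.Adj (e₀ e) (e₁ e))
    (hinj : ∀ e e' : E, s(e₀ e, e₁ e) = s(e₀ e', e₁ e') → e = e')
    (hsurj : ∀ x ∈ G.edgeSet, ∃ e : E, s(e₀ e, e₁ e) = x)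
    (ω : ℝ) (hωpos : 0 < ω) (hω : Real.sin ω ≠ 0) (m : ℕ)
    (φ₁ φ₂ : V → ℂ)
    (hφ₁ : ∀ v : V, ∑ w ∈ G.neighborFinset v, φ₁ w
      = (Real.cos ω : ℂ) * (G.degree v : ℂ) * φ₁ v)
    (hφ₂ : ∀ v : V, ∑ w ∈ G.neighborFinset v, φ₂ w
      = (Real.cos ω : ℂ) * (G.degree v : ℂ) * φ₂ v) :
    ∑ e : E, ∫ x in (0:ℝ)..1,
        (φ₁ (e₀ e) * (Real.cos ((ω + 2 * m * Real.pi) * x) : ℂ)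
          + ((φ₁ (e₁ e) - φ₁ (e₀ e) * (Real.cos ω : ℂ)) / (Real.sin ω : ℂ))
            * (Real.sin ((ω + 2 * m * Real.pi) * x) : ℂ))
        * (starRingEnd ℂ)
          (φ₂ (e₀ e) * (Real.cos ((ω + 2 * m * Real.pi) * x) : ℂ)
            + ((φ₂ (e₁ e) - φ₂ (e₀ e) * (Real.cos ω : ℂ)) / (Real.sin ω : ℂ))
              * (Real.sin ((ω + 2 * m * Real.pi) * x) : ℂ))
    = ∑ e : E, ∫ x in (0:ℝ)..1,
        (φ₁ (e₀ e) * (Real.cos (ω * x) : ℂ)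
          + ((φ₁ (e₁ e) - φ₁ (e₀ e) * (Real.cos ω : ℂ)) / (Real.sin ω : ℂ))
            * (Real.sin (ω * x) : ℂ))
        * (starRingEnd ℂ)
          (φ₂ (e₀ e) * (Real.cos (ω * x) : ℂ)
            + ((φ₂ (e₁ e) - φ₂ (e₀ e) * (Real.cos ω : ℂ)) / (Real.sin ω : ℂ))
              * (Real.sin (ω * x) : ℂ)) :=
  qgfft_freq_shift_inner_product_general G e₀ e₁ hadj hinj hsurj ω hω m φ₁ φ₂ hφ₂
end

section
/- Let ω ∈ ℝ with ω > 0 and sin ω ≠ 0, and let f : V → ℂ. For each ordered pair of adjacent vertices (v, w) define y_{v,w}(x) = f(v)·cos(ωx) + ((f(w) − f(v)·cos ω)/sin ω)·sin(ωx). Then the Kirchhoff derivative condition Σ_{w ~ v} y′_{v,w}(0) = 0 holds at every vertex v if and only if f is a vertex eigenfunction of frequency ω, i.e. Σ_{w ~ v} f(w) = cos(ω)·deg(v)·f(v) for every vertex v. -/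
/-! On every edge the interpolant has slope `ω · (f w - cos ω · f v) / sin ω` at `v`, so the
Kirchhoff sum at `v` is `ω / sin ω` times the defect `∑_{w ~ v} f w - cos ω · deg v · f v` of the
eigenfunction equation. Since `sin ω ≠ 0` forces `ω ≠ 0`, that factor is nonzero. -/

lemma hasDerivAt_cos_add_sin_mul_zero (ω : ℝ) (a c : ℂ) :
    HasDerivAt (fun x : ℝ => a * (Real.cos (ω * x) : ℂ) + c * (Real.sin (ω * x) : ℂ))
      (c * ω) 0 := by
  have hlin : HasDerivAt (fun x : ℝ => ω * x) ω 0 := by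
    simpa using (hasDerivAt_id (0 : ℝ)).const_mul ω
  have hcos : HasDerivAt (fun x : ℝ => (Real.cos (ω * x) : ℂ)) 0 0 := by
    simpa using ((Real.hasDerivAt_cos (ω * 0)).comp 0 hlin).ofReal_comp
  have hsin : HasDerivAt (fun x : ℝ => (Real.sin (ω * x) : ℂ)) ω 0 := by
    simpa using ((Real.hasDerivAt_sin (ω * 0)).comp 0 hlin).ofReal_comp
  exact ((hcos.const_mul a).add (hsin.const_mul c)).congr_deriv (by ring)

lemma sum_deriv_interpolant_eq {ι : Type*} (s : Finset ι) (ω : ℝ) (a : ℂ) (b : ι → ℂ) :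
    ∑ w ∈ s, deriv (fun x : ℝ =>
        a * (Real.cos (ω * x) : ℂ)
          + ((b w - a * (Real.cos ω : ℂ)) / (Real.sin ω : ℂ)) * (Real.sin (ω * x) : ℂ)) 0
      = ((∑ w ∈ s, b w) - (Real.cos ω : ℂ) * (s.card : ℂ) * a) / (Real.sin ω : ℂ) * ω := by
  simp only [fun w => (hasDerivAt_cos_add_sin_mul_zero ω a
    ((b w - a * (Real.cos ω : ℂ)) / (Real.sin ω : ℂ))).deriv]
  rw [← Finset.sum_mul, ← Finset.sum_div, Finset.sum_sub_distrib, Finset.sum_const, nsmul_eq_mul]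
  ring

theorem qgfft_kirchhoff_iff_vertex_eigenfunction_general
    {V : Type*} [Fintype V]
    (G : SimpleGraph V) [DecidableRel G.Adj]
    (ω : ℝ) (hω : Real.sin ω ≠ 0)
    (f : V → ℂ) :
    (∀ v : V, ∑ w ∈ G.neighborFinset v,
        deriv (fun x : ℝ =>
          f v * (Real.cos (ω * x) : ℂ)
            + ((f w - f v * (Real.cos ω : ℂ)) / (Real.sin ω : ℂ))
              * (Real.sin (ω * x) : ℂ)) 0 = 0)
    ↔ (∀ v : V, ∑ w ∈ G.neighborFinset v, f w
        = (Real.cos ω : ℂ) * (G.degree v : ℂ) * f v) := by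
  have hsin : (Real.sin ω : ℂ) ≠ 0 := Complex.ofReal_ne_zero.mpr hω
  have hω₀ : (ω : ℂ) ≠ 0 :=
    Complex.ofReal_ne_zero.mpr fun h => hω (by rw [h, Real.sin_zero])
  refine forall_congr' fun v => ?_
  rw [sum_deriv_interpolant_eq, G.card_neighborFinset_eq_degree, mul_eq_zero_iff_right hω₀,
    div_eq_zero_iff, or_iff_left hsin, sub_eq_zero]

/-- the Kirchhoff derivative condition for the edgewise interpolating
functions holds at every vertex iff the vertex data is a vertex eigenfunction of
frequency `ω`. -/
theorem qgfft_kirchhoff_iff_vertex_eigenfunction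
    {V : Type*} [Fintype V] [DecidableEq V]
    (G : SimpleGraph V) [DecidableRel G.Adj]
    (hdeg : ∀ v : V, 0 < G.degree v)
    (ω : ℝ) (hωpos : 0 < ω) (hω : Real.sin ω ≠ 0)
    (f : V → ℂ) :
    (∀ v : V, ∑ w ∈ G.neighborFinset v,
        deriv (fun x : ℝ =>
          f v * (Real.cos (ω * x) : ℂ)
            + ((f w - f v * (Real.cos ω : ℂ)) / (Real.sin ω : ℂ))
              * (Real.sin (ω * x) : ℂ)) 0 = 0)
    ↔ (∀ v : V, ∑ w ∈ G.neighborFinset v, f w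
        = (Real.cos ω : ℂ) * (G.degree v : ℂ) * f v) :=
  qgfft_kirchhoff_iff_vertex_eigenfunction_general G ω hω f
end
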